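/- Let H be a universal graph. For a finite poset P, define Z_H(P) = Y_H(G⃗_P), where G⃗_P is the Hasse diagram of P regarded as a DAG. Then Z_H is a complete invariant for finite posets: Z_H(P₁) = Z_H(P₂) if and only if P₁ and P₂ are isomorphic as posets. -/

import Mathlib

/-- The underlying simple graph of a directed graph with arc relation `A`, obtained by
forgetting the orientations of the arcs. -/
def underlyingGraph {α : Type} (A : α → α → Prop) : SimpleGraph α where
  Adj u v := u ≠ v ∧ (A u v ∨ A v u)
  symm := ⟨by rintro u v ⟨h, h'⟩; exact ⟨h.symm, h'.symm⟩⟩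
  loopless := ⟨by rintro v ⟨h, -⟩; exact h rfl⟩

/-- `w` is the recursive in-degree weight of the DAG with arc relation `A`:
`w v = 1` if `v` has in-degree `0`, and `w v = 1 + max { w u : u → v an arc }`
otherwise. -/
def WeightSpec {α : Type} (A : α → α → Prop) (w : α → ℕ) : Prop :=
  ∀ v : α,
    ((¬ ∃ u, A u v) → w v = 1) ∧
    (∀ u, A u v → w u + 1 ≤ w v) ∧
    ((∃ u, A u v) → ∃ u, A u v ∧ w v = w u + 1)

/-- The `H`-chromatic function of a finite vertex-weighted graph `(G, w)`, as a formal
power series in variables indexed by the vertices of `H`. -/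
noncomputable def chromFun {α β : Type} [Fintype α] (G : SimpleGraph α) (w : α → ℕ)
    (H : SimpleGraph β) : (β →₀ ℕ) → ℕ :=
  fun d => Nat.card {φ : G →g H //
    Finsupp.mapDomain (⇑φ) (Finsupp.equivFunOnFinite.symm w) = d}

/-- A universal graph: an infinite simple graph containing every finite simple graph
as an induced subgraph. -/
def IsUniversal {β : Type} (H : SimpleGraph β) : Prop :=
  Infinite β ∧ ∀ (α : Type) [Fintype α] (G : SimpleGraph α), Nonempty (G ↪g H)

lemma wpos {α : Type} {A : α → α → Prop} {w : α → ℕ} (hw : WeightSpec A w) (v : α) :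
    w v ≠ 0 := by
  by_cases h : ∃ u, A u v
  · obtain ⟨u, _, hv⟩ := (hw v).2.2 h; omega
  · rw [(hw v).1 h]; omega

lemma le_mapDomain {α γ : Type} [Fintype α] (f : α → γ) (v : α →₀ ℕ) (a : α) :
    v a ≤ Finsupp.mapDomain f v (f a) := by
  classical
  by_cases ha : a ∈ v.support
  · have h1 : Finsupp.mapDomain f v (f a) = ∑ x ∈ v.support, if f x = f a then v x else 0 := by
      rw [Finsupp.mapDomain, Finsupp.sum_apply]
      simp [Finsupp.sum, Finsupp.single_apply]
    rw [h1]
    have h2 := Finset.single_le_sum (f := fun x => if f x = f a then v x else 0)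
      (fun i _ => Nat.zero_le _) ha
    simpa using h2
  · simp [Finsupp.notMem_support_iff.mp ha]

lemma mem_support_mapDomain {α γ : Type} [Fintype α] (f : α → γ) (w : α → ℕ)
    (hw : ∀ a, w a ≠ 0) (a : α) :
    f a ∈ (Finsupp.mapDomain f (Finsupp.equivFunOnFinite.symm w)).support := by
  rw [Finsupp.mem_support_iff]
  have := le_mapDomain f (Finsupp.equivFunOnFinite.symm w) a
  simp only [Finsupp.coe_equivFunOnFinite_symm] at this
  have := hw a
  omega

lemma fiber_finite {α γ : Type} [Fintype α] (G : SimpleGraph α) (Hs : SimpleGraph γ)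
    (w : α → ℕ) (hw : ∀ a, w a ≠ 0) (d : γ →₀ ℕ) :
    Finite {φ : G →g Hs // Finsupp.mapDomain (⇑φ) (Finsupp.equivFunOnFinite.symm w) = d} := by
  classical
  have key : ∀ (φ : {φ : G →g Hs //
      Finsupp.mapDomain (⇑φ) (Finsupp.equivFunOnFinite.symm w) = d}) (a : α),
      (φ : G →g Hs) a ∈ d.support := by
    intro φ a
    have := mem_support_mapDomain (⇑(φ : G →g Hs)) w hw a
    rwa [φ.2] at this
  have hinj : Function.Injective
      (fun (φ : {φ : G →g Hs //
        Finsupp.mapDomain (⇑φ) (Finsupp.equivFunOnFinite.symm w) = d})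
        (a : α) => (⟨(φ : G →g Hs) a, key φ a⟩ : d.support)) := by
    intro φ ψ h
    apply Subtype.ext
    apply DFunLike.ext
    intro a
    exact congrArg Subtype.val (congrFun h a)
  exact Finite.of_injective _ hinj

lemma mapDomain_equiv_fun {α β : Type} [Fintype α] [Fintype β] (σ : β ≃ α) (w : β → ℕ) :
    Finsupp.mapDomain σ (Finsupp.equivFunOnFinite.symm w)
      = Finsupp.equivFunOnFinite.symm (w ∘ σ.symm) := by
  ext a
  conv_lhs => rw [show a = σ (σ.symm a) from (σ.apply_symm_apply a).symm]
  rw [Finsupp.mapDomain_apply σ.injective]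
  simp

lemma exists_pull {α β γ : Type} [Fintype α] [Fintype β]
    (G₁ : SimpleGraph α) (G₂ : SimpleGraph β) (Hs : SimpleGraph γ)
    (w₁ : α → ℕ) (w₂ : β → ℕ) (h₁ : ∀ a, w₁ a ≠ 0) (h₂ : ∀ b, w₂ b ≠ 0)
    (ι : G₁ ↪g Hs)
    (heq : chromFun G₁ w₁ Hs = chromFun G₂ w₂ Hs) :
    ∃ f : β → α, (∀ b b', G₂.Adj b b' → G₁.Adj (f b) (f b')) ∧
      Finsupp.mapDomain f (Finsupp.equivFunOnFinite.symm w₂)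
        = Finsupp.equivFunOnFinite.symm w₁ := by
  classical
  set d := Finsupp.mapDomain (⇑ι) (Finsupp.equivFunOnFinite.symm w₁) with hd
  haveI hfin₁ := fiber_finite G₁ Hs w₁ h₁ d
  haveI hne : Nonempty {φ : G₁ →g Hs //
      Finsupp.mapDomain (⇑φ) (Finsupp.equivFunOnFinite.symm w₁) = d} :=
    ⟨⟨ι.toHom, rfl⟩⟩
  have hpos : 0 < chromFun G₁ w₁ Hs d := Nat.card_pos
  rw [heq] at hpos
  haveI hfin₂ := fiber_finite G₂ Hs w₂ h₂ d
  have hne₂ : Nonempty {φ : G₂ →g Hs //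
      Finsupp.mapDomain (⇑φ) (Finsupp.equivFunOnFinite.symm w₂) = d} :=
    (Nat.card_ne_zero.mp hpos.ne').1
  obtain ⟨⟨φ, hφ⟩⟩ := hne₂
  have hrange : ∀ b, ∃ a, ι a = φ b := by
    intro b
    have hmem : φ b ∈ d.support := by
      rw [← hφ]; exact mem_support_mapDomain _ w₂ h₂ b
    rw [hd] at hmem
    have := Finsupp.mapDomain_support hmem
    obtain ⟨a, -, ha⟩ := Finset.mem_image.mp this
    exact ⟨a, ha⟩
  choose f hf using hrange
  refine ⟨f, ?_, ?_⟩
  · intro b b' hadj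
    have h3 : Hs.Adj (ι (f b)) (ι (f b')) := by
      rw [hf b, hf b']; exact φ.map_adj hadj
    exact ι.map_adj_iff.mp h3
  · apply Finsupp.mapDomain_injective ι.injective
    rw [← Finsupp.mapDomain_comp]
    have hcomp : ⇑ι ∘ f = ⇑φ := funext hf
    rw [hcomp, hφ, hd]

lemma surj_of_mapDomain {α β : Type} [Fintype α] [Fintype β] (f : β → α)
    (w₁ : α → ℕ) (w₂ : β → ℕ) (h₁ : ∀ a, w₁ a ≠ 0)
    (h : Finsupp.mapDomain f (Finsupp.equivFunOnFinite.symm w₂)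
      = Finsupp.equivFunOnFinite.symm w₁) : Function.Surjective f := by
  classical
  intro a
  have ha : a ∈ (Finsupp.equivFunOnFinite.symm w₁).support :=
    Finsupp.mem_support_iff.mpr (by simpa using h₁ a)
  rw [← h] at ha
  obtain ⟨b, -, hb⟩ := Finset.mem_image.mp (Finsupp.mapDomain_support ha)
  exact ⟨b, hb⟩

lemma weight_unique {α : Type} [Finite α] [PartialOrder α] {w w' : α → ℕ}
    (hw : WeightSpec (fun u v : α => u ⋖ v) w)
    (hw' : WeightSpec (fun u v : α => u ⋖ v) w') : w = w' := by
  have wf : WellFounded ((· < ·) : α → α → Prop) := wellFounded_lt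
  funext v
  induction v using wf.induction with
  | _ v ih =>
    by_cases h : ∃ u, u ⋖ v
    · obtain ⟨u, hu, huv⟩ := (hw v).2.2 h
      obtain ⟨u', hu', huv'⟩ := (hw' v).2.2 h
      have h1 := (hw' v).2.1 u hu
      have h2 := (hw v).2.1 u' hu'
      have e1 := ih u hu.lt
      have e2 := ih u' hu'.lt
      omega
    · rw [(hw v).1 h, (hw' v).1 h]

lemma cov_iff {α : Type} [PartialOrder α] {w : α → ℕ}
    (hw : WeightSpec (fun u v : α => u ⋖ v) w) (u v : α) :
    u ⋖ v ↔ ((underlyingGraph (fun u v : α => u ⋖ v)).Adj u v ∧ w u < w v) := by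
  constructor
  · intro h
    refine ⟨⟨h.lt.ne, Or.inl h⟩, ?_⟩
    have := (hw v).2.1 u h; omega
  · rintro ⟨⟨hne, hor⟩, hlt⟩
    rcases hor with h | h
    · exact h
    · have := (hw u).2.1 v h; omega

/-- For a universal graph `H`, the invariant `Z_H(P) = Y_H(G⃗_P)` — the `H`-chromatic
function of the underlying graph of the Hasse diagram of `P` (whose arc relation is the
covering relation `⋖`), equipped with the recursive in-degree weight — is a complete
invariant for finite posets. -/
theorem stmt_12 {γ : Type} (H : SimpleGraph γ) (hH : IsUniversal H)
    {α β : Type} [Fintype α] [Fintype β] [PartialOrder α] [PartialOrder β]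
    (w₁ : α → ℕ) (w₂ : β → ℕ)
    (hw₁ : WeightSpec (fun u v : α => u ⋖ v) w₁)
    (hw₂ : WeightSpec (fun u v : β => u ⋖ v) w₂) :
    chromFun (underlyingGraph (fun u v : α => u ⋖ v)) w₁ H =
        chromFun (underlyingGraph (fun u v : β => u ⋖ v)) w₂ H ↔
      Nonempty (α ≃o β) := by
  classical
  letI : @DecidableRel α α (· < ·) := Classical.decRel _
  letI : @DecidableRel α α (· ≤ ·) := Classical.decRel _
  letI : @DecidableRel β β (· < ·) := Classical.decRel _
  letI : @DecidableRel β β (· ≤ ·) := Classical.decRel _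
  letI : LocallyFiniteOrder α := Fintype.toLocallyFiniteOrder
  letI : LocallyFiniteOrder β := Fintype.toLocallyFiniteOrder
  set G₁ := underlyingGraph (fun u v : α => u ⋖ v) with hG₁
  set G₂ := underlyingGraph (fun u v : β => u ⋖ v) with hG₂
  have h₁ : ∀ a, w₁ a ≠ 0 := wpos hw₁
  have h₂ : ∀ b, w₂ b ≠ 0 := wpos hw₂
  constructor
  · intro heq
    obtain ⟨ι₁⟩ := hH.2 α G₁
    obtain ⟨ι₂⟩ := hH.2 β G₂
    obtain ⟨f, hfadj, hfmap⟩ := exists_pull G₁ G₂ H w₁ w₂ h₁ h₂ ι₁ heq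
    obtain ⟨g, hgadj, hgmap⟩ := exists_pull G₂ G₁ H w₂ w₁ h₂ h₁ ι₂ heq.symm
    have hfsurj := surj_of_mapDomain f w₁ w₂ h₁ hfmap
    have hgsurj := surj_of_mapDomain g w₂ w₁ h₂ hgmap
    have hcard : Fintype.card β = Fintype.card α :=
      le_antisymm (Fintype.card_le_of_surjective g hgsurj)
        (Fintype.card_le_of_surjective f hfsurj)
    have hfbij : Function.Bijective f :=
      (Fintype.bijective_iff_surjective_and_card f).mpr ⟨hfsurj, hcard⟩
    have hgbij : Function.Bijective g :=
      (Fintype.bijective_iff_surjective_and_card g).mpr ⟨hgsurj, hcard.symm⟩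
    have hwf : ∀ b, w₁ (f b) = w₂ b := by
      intro b
      have h3 := Finsupp.mapDomain_apply hfbij.injective
        (Finsupp.equivFunOnFinite.symm w₂) b
      rw [hfmap] at h3
      simpa using h3
    set h : α → α := f ∘ g with hh
    have hhadj : ∀ a a', G₁.Adj a a' → G₁.Adj (h a) (h a') :=
      fun a a' ha => hfadj _ _ (hgadj _ _ ha)
    have hhbij : Function.Bijective h := hfbij.comp hgbij
    set eperm : Equiv.Perm α := Equiv.ofBijective h hhbij with heperm
    have hk : 0 < orderOf eperm := orderOf_pos eperm
    have hiter : ∀ n, ∀ a a', G₁.Adj a a' → G₁.Adj (h^[n] a) (h^[n] a') := by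
      intro n
      induction n with
      | zero => simp
      | succ n ih =>
        intro a a' ha
        simp only [Function.iterate_succ', Function.comp_apply]
        exact hhadj _ _ (ih a a' ha)
    have hid : h^[orderOf eperm] = id := by
      have hc : ⇑(eperm ^ orderOf eperm) = h^[orderOf eperm] := by
        rw [Equiv.Perm.coe_pow]
        rfl
      rw [pow_orderOf_eq_one] at hc
      simpa using hc.symm
    set r : α → β := g ∘ h^[orderOf eperm - 1] with hr
    have hradj : ∀ a a', G₁.Adj a a' → G₂.Adj (r a) (r a') :=
      fun a a' ha => hgadj _ _ (hiter _ _ _ ha)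
    have hfr : ∀ a, f (r a) = a := by
      intro a
      have hcalc : f (r a) = h^[orderOf eperm] a := by
        rw [hr]
        show (f ∘ g) (h^[orderOf eperm - 1] a) = _
        rw [show orderOf eperm = (orderOf eperm - 1) + 1 by omega,
          Function.iterate_succ', Function.comp_apply]
        rfl
      rw [hcalc, hid, id_eq]
    have hrf : ∀ b, r (f b) = b := fun b => hfbij.injective (by rw [hfr])
    have hadj_iff : ∀ b b', G₂.Adj b b' ↔ G₁.Adj (f b) (f b') := by
      intro b b'
      refine ⟨hfadj b b', fun ha => ?_⟩
      have := hradj _ _ ha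
      rwa [hrf, hrf] at this
    have hcov : ∀ b b', b ⋖ b' ↔ f b ⋖ f b' := by
      intro b b'
      rw [cov_iff hw₂ b b', cov_iff hw₁ (f b) (f b'), hwf, hwf, ← hG₁, ← hG₂, hadj_iff]
    have hfrcov : ∀ a a', a ⋖ a' → r a ⋖ r a' := by
      intro a a' ha
      rw [hcov (r a) (r a'), hfr, hfr]
      exact ha
    have hlt : ∀ b b', b < b' ↔ f b < f b' := by
      intro b b'
      rw [lt_iff_transGen_covBy, lt_iff_transGen_covBy]
      constructor
      · exact fun hbb => Relation.TransGen.lift f (fun x y hxy => (hcov x y).mp hxy) _ _ hbb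
      · intro haa
        have : Relation.TransGen (· ⋖ ·) (r (f b)) (r (f b')) :=
          Relation.TransGen.lift r (fun x y hxy => hfrcov x y hxy) _ _ haa
        rwa [hrf, hrf] at this
    have eo : β ≃o α := by
      refine ⟨Equiv.ofBijective f hfbij, ?_⟩
      intro b b'
      show f b ≤ f b' ↔ b ≤ b'
      constructor
      · intro hle
        rcases hle.lt_or_eq with hlt' | heq'
        · exact ((hlt b b').mpr hlt').le
        · exact (hfbij.injective heq').le
      · intro hle
        rcases hle.lt_or_eq with hlt' | heq'
        · exact ((hlt b b').mp hlt').le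
        · rw [heq']
    exact ⟨eo.symm⟩
  · rintro ⟨e⟩
    funext d
    set ee : α ≃ β := e.toEquiv with hee
    have hcove : ∀ u v : α, u ⋖ v ↔ ee u ⋖ ee v := fun u v =>
      (apply_covBy_apply_iff e).symm
    have hspec : WeightSpec (fun u v : α => u ⋖ v) (w₂ ∘ ee) := by
      intro v
      refine ⟨?_, ?_, ?_⟩
      · intro hno
        apply (hw₂ (ee v)).1
        rintro ⟨u', hu'⟩
        exact hno ⟨ee.symm u', (hcove _ v).mpr (by rwa [ee.apply_symm_apply])⟩
      · intro u hu
        exact (hw₂ (ee v)).2.1 (ee u) ((hcove u v).mp hu)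
      · rintro ⟨u, hu⟩
        obtain ⟨u', hu', hval⟩ := (hw₂ (ee v)).2.2 ⟨ee u, (hcove u v).mp hu⟩
        refine ⟨ee.symm u', (hcove _ v).mpr (by rwa [ee.apply_symm_apply]), ?_⟩
        show w₂ (ee v) = w₂ (ee (ee.symm u')) + 1
        rwa [ee.apply_symm_apply]
    have hw12 : w₁ = w₂ ∘ ee := weight_unique hw₁ hspec
    have hadj : ∀ u v : α, G₁.Adj u v ↔ G₂.Adj (ee u) (ee v) := by
      intro u v
      constructor
      · rintro ⟨hne, hor⟩
        exact ⟨fun hx => hne (ee.injective hx), hor.imp (hcove u v).mp (hcove v u).mp⟩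
      · rintro ⟨hne, hor⟩
        exact ⟨fun hx => hne (congrArg ee hx), hor.imp (hcove u v).mpr (hcove v u).mpr⟩
    have hmapee : Finsupp.mapDomain (⇑ee) (Finsupp.equivFunOnFinite.symm w₁)
        = Finsupp.equivFunOnFinite.symm w₂ := by
      rw [mapDomain_equiv_fun ee w₁]
      congr 1
      funext b
      show w₁ (ee.symm b) = w₂ b
      rw [hw12]
      show w₂ (ee (ee.symm b)) = w₂ b
      rw [ee.apply_symm_apply]
    have hmapees : Finsupp.mapDomain (⇑ee.symm) (Finsupp.equivFunOnFinite.symm w₂)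
        = Finsupp.equivFunOnFinite.symm w₁ := by
      rw [mapDomain_equiv_fun ee.symm w₂]
      congr 1
      funext a
      show w₂ (ee.symm.symm a) = w₁ a
      rw [hw12]
      rfl
    apply Nat.card_congr
    refine ⟨fun φ => ⟨⟨(φ : G₁ →g H) ∘ ⇑ee.symm, ?_⟩, ?_⟩,
            fun ψ => ⟨⟨(ψ : G₂ →g H) ∘ ⇑ee, ?_⟩, ?_⟩, ?_, ?_⟩
    · intro b b' hbb
      show H.Adj ((φ : G₁ →g H) (ee.symm b)) ((φ : G₁ →g H) (ee.symm b'))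
      apply (φ : G₁ →g H).map_adj
      rw [hadj (ee.symm b) (ee.symm b'), ee.apply_symm_apply, ee.apply_symm_apply]
      exact hbb
    · show Finsupp.mapDomain (⇑(φ : G₁ →g H) ∘ ⇑ee.symm)
        (Finsupp.equivFunOnFinite.symm w₂) = d
      rw [Finsupp.mapDomain_comp, hmapees]
      exact φ.2
    · intro a a' haa
      show H.Adj ((ψ : G₂ →g H) (ee a)) ((ψ : G₂ →g H) (ee a'))
      exact (ψ : G₂ →g H).map_adj ((hadj a a').mp haa)
    · show Finsupp.mapDomain (⇑(ψ : G₂ →g H) ∘ ⇑ee)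
        (Finsupp.equivFunOnFinite.symm w₁) = d
      rw [Finsupp.mapDomain_comp, hmapee]
      exact ψ.2
    · intro φ
      apply Subtype.ext
      apply DFunLike.ext
      intro a
      show (φ : G₁ →g H) (ee.symm (ee a)) = (φ : G₁ →g H) a
      rw [ee.symm_apply_apply]
    · intro ψ
      apply Subtype.ext
      apply DFunLike.ext
      intro b
      show (ψ : G₂ →g H) (ee (ee.symm b)) = (ψ : G₂ →g H) b
      rw [ee.apply_symm_apply]
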